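/- arXiv:2206.09642 — 2 statements merged into one kernel-verified Lean document; each statement's English description precedes it below -/
import Mathlib

section
/- Fix M > 0 and let μ and ν be Borel probability measures on [0,M]. Write opt(μ) = sup_{x ∈ [0,M]} R(x,μ). Then: (i) opt(μ) − opt(ν) ≤ 2·√(M·d_W(μ,ν)); (ii) for every δ < 0, if x_ν ∈ [0,M] satisfies R(x_ν,ν) = opt(ν) and p = max(x_ν + δ, 0), then opt(ν) − R(p,μ) ≤ |δ| + M·d_W(μ,ν)/|δ|. -/
open MeasureTheory

noncomputable section

/-- Cumulative distribution function `F(t) = μ([0,t])`. -/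
def cdf0 (μ : Measure ℝ) (t : ℝ) : ℝ := (μ (Set.Icc 0 t)).toReal

/-- Wasserstein-1 distance between measures on `[0,M]`: `∫₀^M |F(t) - H(t)| dt`. -/
def wassDist (M : ℝ) (μ ν : Measure ℝ) : ℝ :=
  ∫ t in Set.Icc (0:ℝ) M, |cdf0 μ t - cdf0 ν t|

/-- Expected pricing revenue `R(x,μ) = x · μ{ξ : ξ ≥ x}`. -/
def rev (x : ℝ) (μ : Measure ℝ) : ℝ := x * (μ {ξ : ℝ | x ≤ ξ}).toReal

/-- Optimal revenue `opt(μ) = sup_{x ∈ [0,M]} R(x,μ)`. -/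
def optRev (M : ℝ) (μ : Measure ℝ) : ℝ := ⨆ x : Set.Icc (0:ℝ) M, rev x.1 μ


/-! For `0 ≤ p ≤ x ≤ M` and every `t ∈ [p, x)` we have `ν[x, ∞) ≤ 1 - H(t)` and
`μ[p, ∞) ≥ 1 - F(t)`; integrating over `[p, x)` gives
`(x - p) (ν[x, ∞) - μ[p, ∞)) ≤ d_W(μ, ν)`. For `p = max (x - δ) 0` this bounds
`R(x, ν) - R(p, μ) = δ ν[x, ∞) + p (ν[x, ∞) - μ[p, ∞))` by `δ + M d_W / δ`, which is (ii).
Taking the supremum over `x` with the roles of `μ` and `ν` exchanged and then `δ = √(M d_W)`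
gives (i). -/

open Set

section Cdf

variable (μ : Measure ℝ) [IsProbabilityMeasure μ]

lemma cdf0_mono : Monotone (cdf0 μ) := fun _ _ hst =>
  measureReal_mono (Icc_subset_Icc_right hst)

lemma cdf0_mem_Icc (t : ℝ) : cdf0 μ t ∈ Icc (0 : ℝ) 1 :=
  ⟨measureReal_nonneg, measureReal_le_one⟩

lemma measure_Iio_zero_of_measure_Icc_eq_one {M : ℝ} (hμ : μ (Icc 0 M) = 1) : μ (Iio 0) = 0 :=
  measure_mono_null (fun _ hx hx' => not_le.2 (mem_Iio.1 hx) (mem_Icc.1 hx').1)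
    ((prob_compl_eq_zero_iff (s := Icc 0 M) measurableSet_Icc).2 hμ)

variable {μ}

lemma measureReal_Ioi_eq_one_sub_cdf0 (hμ : μ (Iio 0) = 0) (t : ℝ) :
    μ.real (Ioi t) = 1 - cdf0 μ t := by
  have hIcc : μ (Icc 0 t) = μ (Iic t) := by
    rw [← Ici_inter_Iic, inter_comm]
    exact measure_inter_conull (by rwa [compl_Ici])
  rw [← compl_Iic, probReal_compl_eq_one_sub measurableSet_Iic, cdf0, hIcc, measureReal_def]

end Cdf

section Wasserstein

variable (M : ℝ) (μ ν : Measure ℝ)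

lemma wassDist_nonneg : 0 ≤ wassDist M μ ν :=
  integral_nonneg fun _ => abs_nonneg _

lemma wassDist_comm : wassDist M ν μ = wassDist M μ ν := by
  simp only [wassDist, abs_sub_comm]

lemma integrableOn_abs_cdf0_sub [IsProbabilityMeasure μ] [IsProbabilityMeasure ν] :
    IntegrableOn (fun t => |cdf0 μ t - cdf0 ν t|) (Icc 0 M) := by
  refine Measure.integrableOn_of_bounded (M := 1) measure_Icc_lt_top.ne
    ((cdf0_mono μ).measurable.sub (cdf0_mono ν).measurable).abs.aestronglyMeasurable
    (Filter.Eventually.of_forall fun t => ?_)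
  obtain ⟨hμ₀, hμ₁⟩ := cdf0_mem_Icc μ t
  obtain ⟨hν₀, hν₁⟩ := cdf0_mem_Icc ν t
  rw [Real.norm_eq_abs, abs_abs, abs_sub_le_iff]
  constructor <;> linarith

end Wasserstein

lemma measureReal_Ici_le_one_sub_cdf0 (ν : Measure ℝ) [IsProbabilityMeasure ν] {t x : ℝ}
    (htx : t < x) : ν.real (Ici x) ≤ 1 - cdf0 ν t := by
  rw [cdf0, ← measureReal_def, ← probReal_compl_eq_one_sub measurableSet_Icc]
  exact measureReal_mono fun ξ hξ hξ' => not_le.2 (htx.trans_le hξ) (mem_Icc.1 hξ').2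

lemma sub_mul_measureReal_Ici_sub_le_wassDist {M : ℝ} {μ ν : Measure ℝ} [IsProbabilityMeasure μ]
    [IsProbabilityMeasure ν] (hμ : μ (Iio 0) = 0) {p x : ℝ} (hp : 0 ≤ p) (hpx : p ≤ x)
    (hxM : x ≤ M) :
    (x - p) * (ν.real (Ici x) - μ.real (Ici p)) ≤ wassDist M μ ν := by
  have hsub : Ico p x ⊆ Icc 0 M := fun t ht => ⟨hp.trans ht.1, ht.2.le.trans hxM⟩
  have hpointwise : ∀ t ∈ Ico p x,
      ν.real (Ici x) - μ.real (Ici p) ≤ |cdf0 μ t - cdf0 ν t| := fun t ht => by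
    have hν := measureReal_Ici_le_one_sub_cdf0 ν ht.2
    have hμ' : 1 - cdf0 μ t ≤ μ.real (Ici p) := by
      rw [← measureReal_Ioi_eq_one_sub_cdf0 hμ]
      exact measureReal_mono (Ioi_subset_Ici ht.1)
    linarith [le_abs_self (cdf0 μ t - cdf0 ν t)]
  calc (x - p) * (ν.real (Ici x) - μ.real (Ici p))
      = ∫ _ in Ico p x, (ν.real (Ici x) - μ.real (Ici p)) := by
        rw [setIntegral_const, Real.volume_real_Ico_of_le hpx, smul_eq_mul]
    _ ≤ ∫ t in Ico p x, |cdf0 μ t - cdf0 ν t| :=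
        setIntegral_mono_on (integrableOn_const measure_Ico_lt_top.ne)
          ((integrableOn_abs_cdf0_sub M μ ν).mono_set hsub) measurableSet_Ico hpointwise
    _ ≤ wassDist M μ ν :=
        setIntegral_mono_set (integrableOn_abs_cdf0_sub M μ ν)
          (Filter.Eventually.of_forall fun _ => abs_nonneg _) hsub.eventuallyLE

section Revenue

variable (μ : Measure ℝ)

lemma rev_eq_mul_measureReal_Ici (x : ℝ) : rev x μ = x * μ.real (Ici x) := rfl

variable [IsProbabilityMeasure μ]

lemma rev_le_self {x : ℝ} (hx : 0 ≤ x) : rev x μ ≤ x :=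
  mul_le_of_le_one_right hx measureReal_le_one

lemma bddAbove_range_rev (M : ℝ) : BddAbove (range fun x : Icc (0 : ℝ) M => rev x.1 μ) :=
  ⟨M, by rintro _ ⟨x, rfl⟩; exact (rev_le_self μ x.2.1).trans x.2.2⟩

lemma rev_le_optRev {M x : ℝ} (hx : x ∈ Icc 0 M) : rev x μ ≤ optRev M μ :=
  le_ciSup (bddAbove_range_rev μ M) (⟨x, hx⟩ : Icc (0 : ℝ) M)

omit [IsProbabilityMeasure μ] in
lemma optRev_le {M c : ℝ} (hM : 0 ≤ M) (h : ∀ x ∈ Icc 0 M, rev x μ ≤ c) : optRev M μ ≤ c :=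
  haveI : Nonempty (Icc (0 : ℝ) M) := ⟨⟨0, le_rfl, hM⟩⟩
  ciSup_le fun x => h x.1 x.2

end Revenue

lemma rev_sub_rev_max_sub_le {M : ℝ} {μ ν : Measure ℝ} [IsProbabilityMeasure μ]
    [IsProbabilityMeasure ν] (hμ : μ (Iio 0) = 0) {x δ : ℝ} (hx : x ∈ Icc 0 M) (hδ : 0 < δ) :
    rev x ν - rev (max (x - δ) 0) μ ≤ δ + M * wassDist M μ ν / δ := by
  have hW := wassDist_nonneg M μ ν
  have hM : 0 ≤ M := hx.1.trans hx.2
  rcases le_total (x - δ) 0 with hp | hp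
  · have : 0 ≤ M * wassDist M μ ν / δ := by positivity
    rw [max_eq_right hp, rev_eq_mul_measureReal_Ici μ 0, zero_mul]
    linarith [rev_le_self ν hx.1]
  · rw [max_eq_left hp, rev_eq_mul_measureReal_Ici, rev_eq_mul_measureReal_Ici]
    set p := x - δ with hp_def
    set a := ν.real (Ici x)
    set b := μ.real (Ici p)
    have hkey : δ * (a - b) ≤ wassDist M μ ν := by
      simpa only [hp_def, sub_sub_cancel] using
        sub_mul_measureReal_Ici_sub_le_wassDist (ν := ν) hμ hp (by linarith) hx.2
    have hloss : p * (a - b) ≤ M * wassDist M μ ν / δ := by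
      rw [le_div_iff₀ hδ]
      calc p * (a - b) * δ = p * (δ * (a - b)) := by ring
        _ ≤ p * wassDist M μ ν := mul_le_mul_of_nonneg_left hkey hp
        _ ≤ M * wassDist M μ ν := mul_le_mul_of_nonneg_right (by linarith [hx.2]) hW
    have hδa : δ * a ≤ δ := mul_le_of_le_one_right hδ.le measureReal_le_one
    have hx_eq : x = p + δ := by ring
    rw [hx_eq]
    linarith

lemma optRev_sub_optRev_le {M : ℝ} (hM : 0 ≤ M) {μ ν : Measure ℝ} [IsProbabilityMeasure μ]
    [IsProbabilityMeasure ν] (hν : ν (Iio 0) = 0) {δ : ℝ} (hδ : 0 < δ) :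
    optRev M μ - optRev M ν ≤ δ + M * wassDist M μ ν / δ := by
  suffices optRev M μ ≤ optRev M ν + (δ + M * wassDist M μ ν / δ) by linarith
  refine optRev_le μ hM fun x hx => ?_
  have hdefl := rev_sub_rev_max_sub_le (μ := ν) (ν := μ) hν hx hδ
  have hp : max (x - δ) 0 ∈ Icc 0 M := ⟨le_max_right _ _, max_le (by linarith [hx.2]) hM⟩
  rw [wassDist_comm] at hdefl
  linarith [rev_le_optRev ν hp]

lemma le_two_mul_sqrt_of_forall_le_add_div {a c : ℝ} (hc : 0 ≤ c)
    (h : ∀ δ > 0, a ≤ δ + c / δ) : a ≤ 2 * √c := by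
  rcases hc.eq_or_lt with rfl | hc
  · simp only [zero_div, add_zero] at h
    rw [Real.sqrt_zero, mul_zero]
    exact le_of_forall_pos_le_add fun ε hε => by linarith [h ε hε]
  · have := h √c (Real.sqrt_pos.2 hc)
    rwa [Real.div_sqrt, ← two_mul] at this

/-- Lemma (pricing, Wasserstein): (i) comparison of optimal revenues;
(ii) revenue of the `δ`-deflated SAA price against the out-of-sample distribution. -/
theorem pricing_opt_and_deflated_price
    (M : ℝ) (hM : 0 < M)
    (μ ν : Measure ℝ) [IsProbabilityMeasure μ] [IsProbabilityMeasure ν]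
    (hμ : μ (Set.Icc 0 M) = 1) (hν : ν (Set.Icc 0 M) = 1) :
    optRev M μ - optRev M ν ≤ 2 * Real.sqrt (M * wassDist M μ ν)
    ∧
    ∀ δ : ℝ, δ < 0 → ∀ xν ∈ Set.Icc (0:ℝ) M, rev xν ν = optRev M ν →
      optRev M ν - rev (max (xν + δ) 0) μ ≤ |δ| + M * wassDist M μ ν / |δ| := by
  refine ⟨?_, fun δ hδ xν hxν hopt => ?_⟩
  · exact le_two_mul_sqrt_of_forall_le_add_div (mul_nonneg hM.le (wassDist_nonneg M μ ν))
      fun δ hδ => optRev_sub_optRev_le hM.le (measure_Iio_zero_of_measure_Icc_eq_one ν hν) hδ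
  · rw [← hopt, abs_of_neg hδ, ← sub_neg_eq_add]
    exact rev_sub_rev_max_sub_le (ν := ν) (measure_Iio_zero_of_measure_Icc_eq_one μ hμ) hxν
      (neg_pos.2 hδ)

end
end

section
/- Fix b > 0, M ≥ 2b, and 0 < ε ≤ b/4. Define the Borel probability measures on [0,M]: ν̃ = (1/2)·δ_{b/2 − √(bε)/2} + (1/2)·δ_M and μ̃ = (1/2 − √(ε/b))·δ_{b/2 − √(bε)/2} + √(ε/b)·δ_{b/2 + √(bε)/2} + (1/2)·δ_M. Then d_W(μ̃,ν̃) ≤ ε, and for every rental duration x ∈ [0,M], (1/2)·(S(x,μ̃) − opt(μ̃)) + (1/2)·(S(x,ν̃) − opt(ν̃)) ≥ √(b·ε)/4. -/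
open MeasureTheory

noncomputable section

/-- Expected ski-rental cost with buying cost `b`. -/
def skiCost (b x : ℝ) (μ : Measure ℝ) : ℝ :=
  ∫ ξ, (if ξ ≤ x then ξ else b + x) ∂μ

/-- Optimal ski-rental cost `opt(μ) = inf_{x ∈ [0,M]} S(x,μ)`. -/
def optSki (b M : ℝ) (μ : Measure ℝ) : ℝ := ⨅ x : Set.Icc (0:ℝ) M, skiCost b x.1 μ

/-!
`ν̃` and `μ̃` differ only in that the mass `q = √(ε/b)` sitting at `a = b/2 - √(bε)/2` under `ν̃`
sits at `c = b/2 + √(bε)/2` under `μ̃`. Hence their CDFs differ by `q` exactly on `[a, c)`, and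
`d_W(μ̃, ν̃) = q (c - a) = ε`. For the regret, renting until `a` costs `b - √(bε)/2` under `ν̃`
and buying at once costs `b` under `μ̃`, which bounds both optimal costs, while
`S(x, μ̃) + S(x, ν̃) ≥ 2b` for every `x`, by a case split on the position of `x` among
`a`, `c`, `M`.
-/

open Set

def skiLoss (b x ξ : ℝ) : ℝ := if ξ ≤ x then ξ else b + x

lemma skiLoss_of_le {b x ξ : ℝ} (h : ξ ≤ x) : skiLoss b x ξ = ξ := if_pos h

lemma skiLoss_of_lt {b x ξ : ℝ} (h : x < ξ) : skiLoss b x ξ = b + x := if_neg h.not_ge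

lemma skiLoss_nonneg {b x ξ : ℝ} (hb : 0 ≤ b) (hx : 0 ≤ x) (hξ : 0 ≤ ξ) :
    0 ≤ skiLoss b x ξ := by
  unfold skiLoss; split_ifs <;> linarith

instance isFiniteMeasure_ofReal_smul_dirac (w p : ℝ) :
    IsFiniteMeasure (ENNReal.ofReal w • Measure.dirac p) :=
  (Measure.dirac p).smul_finite ENNReal.ofReal_ne_top

lemma integrable_ofReal_smul_dirac (f : ℝ → ℝ) (w p : ℝ) :
    Integrable f (ENNReal.ofReal w • Measure.dirac p) :=
  (integrable_dirac enorm_lt_top).smul_measure ENNReal.ofReal_ne_top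

lemma skiCost_add {b x : ℝ} {μ ν : Measure ℝ} (hμ : Integrable (skiLoss b x) μ)
    (hν : Integrable (skiLoss b x) ν) :
    skiCost b x (μ + ν) = skiCost b x μ + skiCost b x ν :=
  integral_add_measure hμ hν

lemma skiCost_ofReal_smul_dirac (b x : ℝ) {w : ℝ} (hw : 0 ≤ w) (p : ℝ) :
    skiCost b x (ENNReal.ofReal w • Measure.dirac p) = w * skiLoss b x p := by
  rw [skiCost, integral_smul_measure, integral_dirac, ENNReal.toReal_ofReal hw, smul_eq_mul,
    skiLoss]

lemma optSki_le_skiCost {b M x : ℝ} {μ : Measure ℝ}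
    (hμ : ∀ y ∈ Icc 0 M, 0 ≤ skiCost b y μ) (hx : x ∈ Icc 0 M) :
    optSki b M μ ≤ skiCost b x μ :=
  ciInf_le ⟨0, by rintro _ ⟨y, rfl⟩; exact hμ y y.2⟩ (⟨x, hx⟩ : Icc (0 : ℝ) M)

lemma cdf0_add (μ ν : Measure ℝ) [IsFiniteMeasure μ] [IsFiniteMeasure ν] (t : ℝ) :
    cdf0 (μ + ν) t = cdf0 μ t + cdf0 ν t := by
  rw [cdf0, Measure.add_apply, ENNReal.toReal_add (measure_ne_top _ _) (measure_ne_top _ _)]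
  rfl

lemma cdf0_ofReal_smul_dirac {w p : ℝ} (hw : 0 ≤ w) (hp : 0 ≤ p) (t : ℝ) :
    cdf0 (ENNReal.ofReal w • Measure.dirac p) t = if p ≤ t then w else 0 := by
  rw [cdf0, Measure.smul_apply, Measure.dirac_apply, indicator_apply]
  by_cases h : p ≤ t <;> simp [h, hp, hw]

lemma wassDist_add_ofReal_smul_dirac (ρ : Measure ℝ) [IsFiniteMeasure ρ] {M w a c : ℝ}
    (hw : 0 ≤ w) (ha : 0 ≤ a) (hac : a ≤ c) (hcM : c ≤ M) :
    wassDist M (ρ + ENNReal.ofReal w • Measure.dirac c)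
      (ρ + ENNReal.ofReal w • Measure.dirac a) = w * (c - a) := by
  have hdiff : ∀ t, |cdf0 (ρ + ENNReal.ofReal w • Measure.dirac c) t -
      cdf0 (ρ + ENNReal.ofReal w • Measure.dirac a) t| = (Ico a c).indicator (fun _ ↦ w) t := by
    intro t
    rw [cdf0_add, cdf0_add, cdf0_ofReal_smul_dirac hw (ha.trans hac),
      cdf0_ofReal_smul_dirac hw ha, indicator_apply]
    by_cases hat : a ≤ t <;> by_cases hct : c ≤ t <;>
      simp [hat, hct, mem_Ico, abs_of_nonneg hw, lt_of_not_ge]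
    linarith
  have hsub : Ico a c ⊆ Icc 0 M := fun t ht ↦ ⟨ha.trans ht.1, ht.2.le.trans hcM⟩
  rw [wassDist, integral_congr_ae (Filter.Eventually.of_forall hdiff),
    setIntegral_indicator measurableSet_Ico, inter_eq_self_of_subset_right hsub,
    setIntegral_const, Real.volume_real_Ico_of_le hac, smul_eq_mul, mul_comm]

/-- The paper's `ν̃` is `hardPrior q a M a` and its `μ̃` is `hardPrior q a M c`: the mass `q`
sitting at `a` is moved to `c`. -/
def hardPrior (q a M p : ℝ) : Measure ℝ :=
  ENNReal.ofReal (1/2 - q) • Measure.dirac a + ENNReal.ofReal (1/2) • Measure.dirac M +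
    ENNReal.ofReal q • Measure.dirac p

section hardPrior

variable {b q a M p x : ℝ}

lemma skiCost_hardPrior (hq0 : 0 ≤ q) (hq : q ≤ 1/2) :
    skiCost b x (hardPrior q a M p) =
      (1/2 - q) * skiLoss b x a + 1/2 * skiLoss b x M + q * skiLoss b x p := by
  rw [hardPrior, skiCost_add ((integrable_ofReal_smul_dirac _ _ _).add_measure
      (integrable_ofReal_smul_dirac _ _ _)) (integrable_ofReal_smul_dirac _ _ _),
    skiCost_add (integrable_ofReal_smul_dirac _ _ _) (integrable_ofReal_smul_dirac _ _ _),
    skiCost_ofReal_smul_dirac _ _ (by linarith), skiCost_ofReal_smul_dirac _ _ (by norm_num),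
    skiCost_ofReal_smul_dirac _ _ hq0]

lemma optSki_hardPrior_le_skiCost (hb : 0 ≤ b) (hq0 : 0 ≤ q) (hq : q ≤ 1/2) (ha : 0 ≤ a)
    (hp : 0 ≤ p) (hx : x ∈ Icc 0 M) :
    optSki b M (hardPrior q a M p) ≤ skiCost b x (hardPrior q a M p) := by
  refine optSki_le_skiCost (fun y hy ↦ ?_) hx
  have hM : 0 ≤ M := hx.1.trans hx.2
  rw [skiCost_hardPrior hq0 hq]
  have := skiLoss_nonneg hb hy.1 ha
  have := skiLoss_nonneg hb hy.1 hM
  have := skiLoss_nonneg hb hy.1 hp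
  have : 0 ≤ 1/2 - q := by linarith
  positivity

lemma optSki_hardPrior_le (hb : 0 ≤ b) (hq0 : 0 ≤ q) (hq : q ≤ 1/2) (ha : 0 < a) (hp : 0 < p)
    (hM : 0 < M) :
    optSki b M (hardPrior q a M p) ≤ b := by
  refine (optSki_hardPrior_le_skiCost hb hq0 hq ha.le hp.le ⟨le_rfl, hM.le⟩).trans_eq ?_
  rw [skiCost_hardPrior hq0 hq, skiLoss_of_lt ha, skiLoss_of_lt hM, skiLoss_of_lt hp]
  ring

lemma optSki_hardPrior_self_le (hb : 0 ≤ b) (hq0 : 0 ≤ q) (hq : q ≤ 1/2) (ha : 0 ≤ a)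
    (haM : a < M) :
    optSki b M (hardPrior q a M a) ≤ a + b / 2 := by
  refine (optSki_hardPrior_le_skiCost hb hq0 hq ha ha ⟨ha, haM.le⟩).trans_eq ?_
  rw [skiCost_hardPrior hq0 hq, skiLoss_of_le le_rfl, skiLoss_of_lt haM]
  ring

lemma wassDist_hardPrior {c : ℝ} (hq0 : 0 ≤ q) (ha : 0 ≤ a) (hac : a ≤ c) (hcM : c ≤ M) :
    wassDist M (hardPrior q a M c) (hardPrior q a M a) = q * (c - a) :=
  wassDist_add_ofReal_smul_dirac _ hq0 ha hac hcM

end hardPrior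

/-- The right-hand side is `S(x, μ̃) + S(x, ν̃)` by `skiCost_hardPrior`. -/
lemma two_mul_le_skiLoss_mix {b s q x M : ℝ} (hs : 0 ≤ s) (hsb : s ≤ b) (hq0 : 0 ≤ q)
    (hqb : q * b = s) (hx : 0 ≤ x) (hM : 2 * b ≤ M) :
    2 * b ≤ (1 - q) * skiLoss b x (b / 2 - s / 2) + q * skiLoss b x (b / 2 + s / 2) +
      skiLoss b x M := by
  unfold skiLoss
  split_ifs <;> nlinarith [mul_nonneg hq0 hs]

lemma sqrt_div_mul_self {b : ℝ} (hb : 0 < b) (ε : ℝ) : √(ε / b) * b = √(b * ε) := by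
  calc √(ε / b) * b = √(ε / b) * √(b * b) := by rw [Real.sqrt_mul_self hb.le]
    _ = √(ε / b * (b * b)) := (Real.sqrt_mul' _ (mul_self_nonneg b)).symm
    _ = √(b * ε) := by congr 1; field_simp

/-- Bayesian lower bound of order `√(bε)` for the ski-rental problem under Wasserstein
heterogeneity. -/
theorem ski_rental_wasserstein_lower_bound
    (M b ε : ℝ) (hb : 0 < b) (hM : 2 * b ≤ M) (hε : 0 < ε) (hε2 : ε ≤ b / 4)
    (νt μt : Measure ℝ)
    (hνt : νt = ENNReal.ofReal (1/2) • Measure.dirac (b / 2 - Real.sqrt (b * ε) / 2) +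
                ENNReal.ofReal (1/2) • Measure.dirac M)
    (hμt : μt = ENNReal.ofReal (1/2 - Real.sqrt (ε / b)) •
                  Measure.dirac (b / 2 - Real.sqrt (b * ε) / 2) +
                ENNReal.ofReal (Real.sqrt (ε / b)) •
                  Measure.dirac (b / 2 + Real.sqrt (b * ε) / 2) +
                ENNReal.ofReal (1/2) • Measure.dirac M) :
    wassDist M μt νt ≤ ε ∧
    ∀ x ∈ Set.Icc (0:ℝ) M,
      (1/2) * (skiCost b x μt - optSki b M μt) +
        (1/2) * (skiCost b x νt - optSki b M νt) ≥
      Real.sqrt (b * ε) / 4 := by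
  set s := √(b * ε)
  set q := √(ε / b)
  set a := b / 2 - s / 2 with ha
  set c := b / 2 + s / 2 with hc
  have hs0 : 0 < s := Real.sqrt_pos.2 (by positivity)
  have hs2 : s ^ 2 = b * ε := Real.sq_sqrt (by positivity)
  have hq0 : 0 < q := Real.sqrt_pos.2 (by positivity)
  have hqb : q * b = s := sqrt_div_mul_self hb ε
  have hqs : q * s = ε := by nlinarith
  have hsb : s ≤ b / 2 := by nlinarith
  have hq : q ≤ 1 / 2 := by nlinarith
  obtain rfl : νt = hardPrior q a M a := by
    rw [hνt, hardPrior, add_right_comm (ENNReal.ofReal (1/2 - q) • _), ← add_smul,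
      ← ENNReal.ofReal_add (by linarith) hq0.le, sub_add_cancel]
  obtain rfl : μt = hardPrior q a M c := by rw [hμt, hardPrior, add_right_comm]
  refine ⟨?_, fun x hx ↦ ?_⟩
  · rw [wassDist_hardPrior hq0.le (by linarith) (by linarith) (by linarith),
      show c - a = s by linarith, hqs]
  have hoptμ : optSki b M (hardPrior q a M c) ≤ b :=
    optSki_hardPrior_le hb.le hq0.le hq (by linarith) (by linarith) (by linarith)
  have hoptν : optSki b M (hardPrior q a M a) ≤ a + b / 2 :=
    optSki_hardPrior_self_le hb.le hq0.le hq (by linarith) (by linarith)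
  have hmix := two_mul_le_skiLoss_mix hs0.le (by linarith) hq0.le hqb hx.1 hM
  rw [skiCost_hardPrior hq0.le hq, skiCost_hardPrior hq0.le hq]
  linarith

end
end
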